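/- arXiv:math/0604001 — 2 statements merged into one kernel-verified Lean document; each statement's English description precedes it below -/
import Mathlib

section
/- Let A be an integer matrix. The set of non-negative integer solutions x of Ax = 0 is generated under addition by a finite set of solutions; that is, there exists a finite set F of non-negative integer solutions such that every non-negative integer solution is a finite sum (with non-negative integer multiplicities) of elements of F. -/
/-! The solutions form the kernel of an additive monoid map out of `ℕⁿ`, and such a kernel is
subtractive: `x, x + y ∈ ker` forces `y ∈ ker`. In the well-quasi-ordered monoid `ℕⁿ` (Dickson's
lemma) a subtractive submonoid is generated by its minimal nonzero elements, which form an
antichain and are therefore finitely many. -/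

theorem AddMonoidHom.mem_mker_of_add_mem_mker {M N : Type*} [AddZeroClass M] [AddZeroClass N]
    (f : M →+ N) {x y : M} (hx : x ∈ mker f) (hxy : x + y ∈ mker f) : y ∈ mker f := by
  rw [mem_mker, map_add, hx, zero_add] at hxy
  exact hxy

def Matrix.natMulVecHom {κ ι : Type*} [Fintype ι] (A : Matrix κ ι ℤ) : (ι → ℕ) →+ (κ → ℤ) :=
  A.mulVecLin.toAddMonoidHom.comp (AddMonoidHom.compLeft (Nat.castAddMonoidHom ℤ) ι)

theorem Matrix.mem_mker_natMulVecHom {κ ι : Type*} [Fintype ι] (A : Matrix κ ι ℤ) (x : ι → ℕ) :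
    x ∈ AddMonoidHom.mker A.natMulVecHom ↔ A.mulVec (fun j => (x j : ℤ)) = 0 :=
  Iff.rfl

theorem Matrix.fg_mker_natMulVecHom {κ ι : Type*} [Fintype ι] (A : Matrix κ ι ℤ) :
    (AddMonoidHom.mker A.natMulVecHom).FG :=
  AddSubmonoid.fg_of_subtractive fun _ hx _ hxy =>
    A.natMulVecHom.mem_mker_of_add_mem_mker hx hxy

/-- Haken's finiteness theorem: the non-negative integer solutions of a homogeneous
integer linear system `A x = 0` are generated under addition by a finite set. -/
theorem haken_finite_generation (m n : ℕ) (A : Matrix (Fin m) (Fin n) ℤ) :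
    ∃ F : Finset (Fin n → ℕ),
      (∀ f ∈ F, A.mulVec (fun j => (f j : ℤ)) = 0) ∧
      (∀ x : Fin n → ℕ, A.mulVec (fun j => (x j : ℤ)) = 0 →
        ∃ c : (Fin n → ℕ) → ℕ, x = ∑ f ∈ F, c f • f) := by
  obtain ⟨F, hF⟩ := A.fg_mker_natMulVecHom
  refine ⟨F, fun f hf => ?_, fun x hx => ?_⟩
  · rw [← A.mem_mker_natMulVecHom, ← hF]
    exact AddSubmonoid.subset_closure hf
  · rw [← A.mem_mker_natMulVecHom, ← hF, AddSubmonoid.mem_closure_finset] at hx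
    obtain ⟨c, -, hc⟩ := hx
    exact ⟨c, hc.symm⟩
end

section
/- The set of fundamental solutions of a homogeneous integer linear system is finite: if A is an integer matrix, then the set of non-negative integer solutions x of Ax = 0 that cannot be written as a sum of two nonzero non-negative integer solutions is finite. -/
/-! If `x ≤ y` are both solutions then so is `y - x`, so a solution lying strictly above another
one decomposes; hence the fundamental solutions form an antichain of `ℕⁿ`, which is finite by
Dickson's lemma. -/

section Indecomposable

variable {α : Type*} [AddCommMonoid α] [PartialOrder α] [CanonicallyOrderedAdd α] [Sub α]
  [OrderedSub α]

theorem isAntichain_setOf_indecomposable {S : Set α}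
    (hS : ∀ a ∈ S, ∀ b ∈ S, a ≤ b → b - a ∈ S) :
    IsAntichain (· ≤ ·)
      {x | x ∈ S ∧ x ≠ 0 ∧ ¬ ∃ y z, y ∈ S ∧ y ≠ 0 ∧ z ∈ S ∧ z ≠ 0 ∧ x = y + z} := by
  rintro a ⟨ha, ha0, -⟩ b ⟨hb, -, hb_indec⟩ hne hle
  exact hb_indec ⟨a, b - a, ha, ha0, hS a ha b hb hle,
    (tsub_pos_of_lt (lt_of_le_of_ne hle hne)).ne', (add_tsub_cancel_of_le hle).symm⟩

theorem finite_setOf_indecomposable [WellQuasiOrderedLE α] {S : Set α}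
    (hS : ∀ a ∈ S, ∀ b ∈ S, a ≤ b → b - a ∈ S) :
    {x | x ∈ S ∧ x ≠ 0 ∧ ¬ ∃ y z, y ∈ S ∧ y ≠ 0 ∧ z ∈ S ∧ z ≠ 0 ∧ x = y + z}.Finite :=
  (isAntichain_setOf_indecomposable hS).finite_of_partiallyWellOrderedOn
    (Set.isPWO_of_wellQuasiOrderedLE _)

end Indecomposable

theorem Matrix.mulVec_natCast_tsub_eq_zero {m n : Type*} [Fintype n] (A : Matrix m n ℤ)
    {x y : n → ℕ} (hx : A.mulVec (fun j => (x j : ℤ)) = 0)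
    (hy : A.mulVec (fun j => (y j : ℤ)) = 0)
    (hxy : x ≤ y) : A.mulVec (fun j => ((y - x) j : ℤ)) = 0 := by
  have hcast : (fun j => ((y - x) j : ℤ)) = (fun j => (y j : ℤ)) - fun j => (x j : ℤ) := by
    funext j
    simp [Nat.cast_sub (hxy j)]
  rw [hcast, Matrix.mulVec_sub, hx, hy, sub_zero]

/-- The set of fundamental solutions of a homogeneous integer linear system is finite. -/
theorem fundamental_solutions_finite (m n : ℕ) (A : Matrix (Fin m) (Fin n) ℤ) :
    {x : Fin n → ℕ | A.mulVec (fun j => (x j : ℤ)) = 0 ∧ x ≠ 0 ∧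
      ¬ ∃ y z : Fin n → ℕ, A.mulVec (fun j => (y j : ℤ)) = 0 ∧ y ≠ 0 ∧
          A.mulVec (fun j => (z j : ℤ)) = 0 ∧ z ≠ 0 ∧ x = y + z}.Finite :=
  finite_setOf_indecomposable (S := {x : Fin n → ℕ | A.mulVec (fun j => (x j : ℤ)) = 0})
    fun _ hx _ hy hxy => A.mulVec_natCast_tsub_eq_zero hx hy hxy
end
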